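/- Let {C_0, ..., C_d} be a d-critical family in R^d, and for each j let p_j be the (unique) point of ∩_{i≠j} C_i nearest to C_j. Then p_0, ..., p_d are affinely independent, so their convex hull is a d-simplex. -/

import Mathlib

/-!
If the `p j` were affinely dependent, Radon's theorem would split the indices into `I` and `Iᶜ`
with `convexHull (p '' I)` and `convexHull (p '' Iᶜ)` meeting at some `x`. Each `C i` contains
every `p j` with `j ≠ i`, hence the convex hull of whichever part misses `i`; so `x` lies in all
the `C i`, contradicting `⋂ i, C i = ∅`.
-/

open Set

section

variable {ι 𝕜 E : Type*} [Field 𝕜] [LinearOrder 𝕜] [AddCommGroup E] [Module 𝕜 E]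
  {C : ι → Set E} {p : ι → E}

theorem convexHull_image_subset_of_notMem {i : ι} {s : Set ι} (hconv : Convex 𝕜 (C i))
    (hp : ∀ j, j ≠ i → p j ∈ C i) (hi : i ∉ s) : convexHull 𝕜 (p '' s) ⊆ C i :=
  hconv.convexHull_subset_iff.2 <| image_subset_iff.2 fun j hj ↦ hp j (ne_of_mem_of_not_mem hj hi)

theorem affineIndependent_of_iInter_eq_empty [IsStrictOrderedRing 𝕜]
    (hconv : ∀ i, Convex 𝕜 (C i)) (hempty : ⋂ i, C i = ∅) (hp : ∀ i j, j ≠ i → p j ∈ C i) :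
    AffineIndependent 𝕜 p := by
  by_contra hdep
  obtain ⟨I, x, hxI, hxIc⟩ := Convex.radon_partition hdep
  have hx : x ∈ ⋂ i, C i := mem_iInter.2 fun i ↦ by
    by_cases hi : i ∈ I
    · exact convexHull_image_subset_of_notMem (hconv i) (hp i) (notMem_compl_iff.2 hi) hxIc
    · exact convexHull_image_subset_of_notMem (hconv i) (hp i) hi hxI
  simp [hempty] at hx

end

theorem nearest_points_affineIndependent_general (d : ℕ)
    (C : Fin (d + 1) → Set (EuclideanSpace ℝ (Fin d)))
    (hconv : ∀ i, Convex ℝ (C i))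
    (hempty : (⋂ i, C i) = ∅)
    (p : Fin (d + 1) → EuclideanSpace ℝ (Fin d))
    (hp : ∀ j, p j ∈ (⋂ i ∈ {i : Fin (d + 1) | i ≠ j}, C i) ∧
      ∀ q ∈ (⋂ i ∈ {i : Fin (d + 1) | i ≠ j}, C i),
        Metric.infDist (p j) (C j) ≤ Metric.infDist q (C j)) :
    AffineIndependent ℝ p :=
  affineIndependent_of_iInter_eq_empty hconv hempty fun i j hji ↦
    mem_iInter₂.1 (hp j).1 i (Ne.symm hji)

/-- The nearest points p_j of the partial intersections to C_j are affinely
independent, so their convex hull is a d-simplex. -/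
theorem nearest_points_affineIndependent (d : ℕ)
    (C : Fin (d + 1) → Set (EuclideanSpace ℝ (Fin d)))
    (hcomp : ∀ i, IsCompact (C i)) (hconv : ∀ i, Convex ℝ (C i))
    (hcrit : ∀ j, (⋂ i ∈ {i : Fin (d + 1) | i ≠ j}, C i).Nonempty)
    (hempty : (⋂ i, C i) = ∅)
    (p : Fin (d + 1) → EuclideanSpace ℝ (Fin d))
    (hp : ∀ j, p j ∈ (⋂ i ∈ {i : Fin (d + 1) | i ≠ j}, C i) ∧
      ∀ q ∈ (⋂ i ∈ {i : Fin (d + 1) | i ≠ j}, C i),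
        Metric.infDist (p j) (C j) ≤ Metric.infDist q (C j)) :
    AffineIndependent ℝ p :=
  nearest_points_affineIndependent_general d C hconv hempty p hp
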